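/- arXiv:2111.07255 — 3 statements merged into one kernel-verified Lean document; each statement's English description precedes it below -/
import Mathlib

section
/- For the extended sl₂ crystal B̂(∞) = (ℤ_{≥0})^{⊕ℤ} with operators F̃_k defined by the signature rule (F̃_k decreases entry k+1 by one if b_{k+1} > b_k, otherwise increases entry k by one), the ℤ-colored graph with vertex set (ℤ_{≥0})^{⊕ℤ} and arrows b → F̃_k(b) is connected: every element is connected to the zero sequence by a finite path of arrows (in either direction). -/
/-- The extended crystal operator `F̃ₖ` on the extended sl₂ crystal `B̂(∞) = (ℤ≥0)^{⊕ℤ}`. -/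
noncomputable def Ftil (k : ℤ) (b : ℤ →₀ ℕ) : ℤ →₀ ℕ :=
  if b k < b (k + 1) then b.update (k + 1) (b (k + 1) - 1)
  else b.update k (b k + 1)

/-- The extended crystal operator `Ẽₖ` on the extended sl₂ crystal `B̂(∞) = (ℤ≥0)^{⊕ℤ}`. -/
noncomputable def Etil (k : ℤ) (b : ℤ →₀ ℕ) : ℤ →₀ ℕ :=
  if b (k + 1) < b k then b.update k (b k - 1)
  else b.update (k + 1) (b (k + 1) + 1)



lemma update_apply' (b : ℤ →₀ ℕ) (a : ℤ) (m : ℕ) (i : ℤ) :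
    b.update a m i = if i = a then m else b i := by
  rw [Finsupp.coe_update]; simp [Function.update]

lemma const_zero (b : ℤ →₀ ℕ) (h : ∀ k : ℤ, b k = b (k + 1)) : b = 0 := by
  by_contra hb
  obtain ⟨m, hm⟩ : ∃ m, b m ≠ 0 := by
    by_contra h'; push_neg at h'; exact hb (Finsupp.ext fun i => h' i)
  have key : ∀ n : ℕ, b (m + n) = b m := by
    intro n
    induction n with
    | zero => simp
    | succ n ih => rw [← ih, Nat.cast_add, Nat.cast_one, ← add_assoc]; exact (h (m + n)).symm
  have hinf : (↑b.support : Set ℤ).Infinite := by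
    apply Set.infinite_of_injective_forall_mem (f := fun n : ℕ => m + n)
      (hi := fun a b' hab => by simpa using hab)
    intro n
    simp only [Finset.mem_coe, Finsupp.mem_support_iff, key n]
    exact hm
  exact hinf b.support.finite_toSet

/-- The `ℤ`-colored graph on `B̂(∞)` with arrows `b → F̃ₖ(b)` is connected: every vertex is
joined to the zero sequence by a finite undirected path. -/
theorem extended_crystal_connected (b : ℤ →₀ ℕ) :
    Relation.ReflTransGen
      (fun x y : ℤ →₀ ℕ => (∃ k : ℤ, y = Ftil k x) ∨ (∃ k : ℤ, x = Ftil k y)) b 0 := by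
  induction b using WellFoundedLT.induction with
  | _ b ih =>
  rcases eq_or_ne b 0 with rfl | hb
  · exact Relation.ReflTransGen.refl
  · obtain ⟨k, hk⟩ : ∃ k : ℤ, b k ≠ b (k + 1) := by
      by_contra h'; push_neg at h'; exact hb (const_zero b h')
    rcases hk.lt_or_gt with hlt | hlt
    · -- b k < b (k+1): Ftil k b decreases
      set y := b.update (k + 1) (b (k + 1) - 1) with hy
      have hFy : Ftil k b = y := by rw [Ftil, if_pos hlt]
      have hylt : y < b := by
        apply lt_of_le_of_ne
        · intro i
          rw [hy, update_apply' ]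
          split
          · next hik => subst hik; omega
          · exact le_rfl
        · intro h
          have := DFunLike.congr_fun h (k + 1)
          rw [hy, update_apply'] at this
          simp at this
          omega
      exact Relation.ReflTransGen.head (Or.inl ⟨k, hFy.symm⟩) (ih y hylt)
    · -- b (k+1) < b k : b = Ftil k y with y = b lowered at k
      set y := b.update k (b k - 1) with hy
      have hyk : y k = b k - 1 := by rw [hy, update_apply']; simp
      have hyk1 : y (k + 1) = b (k + 1) := by
        rw [hy, update_apply']; rw [if_neg]; omega
      have hFy : Ftil k y = b := by
        rw [Ftil, if_neg (by omega)]
        ext i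
        rw [update_apply', hyk]
        split
        · subst i; omega
        · rw [hy, update_apply']; simp_all
      have hylt : y < b := by
        apply lt_of_le_of_ne
        · intro i
          rw [hy, update_apply']
          split
          · next hik => subst hik; omega
          · exact le_rfl
        · intro h
          have := DFunLike.congr_fun h k
          rw [hyk] at this; omega
      exact Relation.ReflTransGen.head (Or.inr ⟨k, hFy.symm⟩) (ih y hylt)
end

section
/- Fix n ≥ 1 and 1 ≤ i ≤ n. Define, for 1 ≤ t ≤ 2n, the elements a_t ∈ ℤ² by a_{2k−1} = (k, 2(i−1) + k − 1) and a_{2k} = (k, 2(i−1) + k + 1) for 1 ≤ k ≤ n. Then a_t ∈ ĴI_n^0 = {(j,c) : 1 ≤ j ≤ n, c − j odd, j − 1 ≤ c ≤ 2n − 1 − j} if and only if 1 ≤ t ≤ 2(n − i) + 1, and a_t ∈ ĴI_n^1 = {(j,c) : 1 ≤ j ≤ n, c − j odd, 2n − j + 1 ≤ c ≤ 2n + j − 1} if and only if 2(n − i) + 2 ≤ t ≤ 2n. -/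
/-- The element `aₜ` of the signature set `S_{i,0}`: `a_{2k−1} = (k, 2(i−1)+k−1)` and
`a_{2k} = (k, 2(i−1)+k+1)`. -/
def aElt (i t : ℤ) : ℤ × ℤ :=
  if Odd t then ((t + 1) / 2, 2 * (i - 1) + (t + 1) / 2 - 1)
  else (t / 2, 2 * (i - 1) + t / 2 + 1)

/-- `ĴIₙ⁰ = {(j,c) : 1 ≤ j ≤ n, c − j odd, j − 1 ≤ c ≤ 2n − 1 − j}`. -/
def hatI0 (n : ℤ) : Set (ℤ × ℤ) :=
  {p | 1 ≤ p.1 ∧ p.1 ≤ n ∧ Odd (p.2 - p.1) ∧ p.1 - 1 ≤ p.2 ∧ p.2 ≤ 2 * n - 1 - p.1}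

/-- `ĴIₙ¹ = {(j,c) : 1 ≤ j ≤ n, c − j odd, 2n − j + 1 ≤ c ≤ 2n + j − 1}`. -/
def hatI1 (n : ℤ) : Set (ℤ × ℤ) :=
  {p | 1 ≤ p.1 ∧ p.1 ≤ n ∧ Odd (p.2 - p.1) ∧ 2 * n - p.1 + 1 ≤ p.2 ∧ p.2 ≤ 2 * n + p.1 - 1}

/-- `aₜ ∈ ĴIₙ⁰` iff `1 ≤ t ≤ 2(n−i)+1`, and `aₜ ∈ ĴIₙ¹` iff `2(n−i)+2 ≤ t ≤ 2n`. -/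
theorem aElt_mem_slices (n i : ℤ) (hn : 1 ≤ n) (hi1 : 1 ≤ i) (hin : i ≤ n)
    (t : ℤ) (ht1 : 1 ≤ t) (ht2 : t ≤ 2 * n) :
    (aElt i t ∈ hatI0 n ↔ 1 ≤ t ∧ t ≤ 2 * (n - i) + 1) ∧
    (aElt i t ∈ hatI1 n ↔ 2 * (n - i) + 2 ≤ t ∧ t ≤ 2 * n) := by
  rcases Int.even_or_odd t with he | ho
  · have hnot : ¬ Odd t := by simp [Int.not_odd_iff_even, he]
    obtain ⟨k, hk⟩ := he
    have hdiv : t / 2 = k := by omega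
    have hA : aElt i t = (k, 2 * (i - 1) + k + 1) := by
      rw [aElt, if_neg hnot, hdiv]
    rw [hA]
    simp only [hatI0, hatI1, Set.mem_setOf_eq]
    have hodd : Odd (2 * (i - 1) + k + 1 - k) := ⟨i - 1, by ring⟩
    constructor <;> constructor <;> intro h
    · exact ⟨by omega, by omega⟩
    · exact ⟨by omega, by omega, hodd, by omega, by omega⟩
    · exact ⟨by omega, by omega⟩
    · exact ⟨by omega, by omega, hodd, by omega, by omega⟩
  · obtain ⟨k, hk⟩ := ho
    have hdiv : (t + 1) / 2 = k + 1 := by omega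
    have hA : aElt i t = (k + 1, 2 * (i - 1) + (k + 1) - 1) := by
      rw [aElt, if_pos ⟨k, hk⟩, hdiv]
    rw [hA]
    simp only [hatI0, hatI1, Set.mem_setOf_eq]
    have hodd : Odd (2 * (i - 1) + (k + 1) - 1 - (k + 1)) := ⟨i - 2, by ring⟩
    constructor <;> constructor <;> intro h
    · exact ⟨by omega, by omega⟩
    · exact ⟨by omega, by omega, hodd, by omega, by omega⟩
    · exact ⟨by omega, by omega⟩
    · exact ⟨by omega, by omega, hodd, by omega, by omega⟩
end

section
/- For the extended sl₂ crystal B̂(∞) = (ℤ_{≥0})^{⊕ℤ} with operators F̃_k and Ẽ_k given by the signature rule, and the involution σ defined by σ(b)_k = b_{−k} (using that * acts trivially on B(∞) of sl₂): σ(F̃_{−k}(σ(b))) = Ẽ_{k−1}(b) for all b ∈ B̂(∞) and k ∈ ℤ. -/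
/-- The involution `σ(b)ₖ = b_{−k}` on `B̂(∞)` (the Kashiwara involution `*` is trivial
in the rank-one case). -/
noncomputable def sigmaInv (b : ℤ →₀ ℕ) : ℤ →₀ ℕ :=
  Finsupp.equivMapDomain (Equiv.neg ℤ) b

/-- `σ(F̃_{−k}(σ(b))) = Ẽ_{k−1}(b)`, i.e. `F̃*ₖ = Ẽ_{k−1}` in the rank-one extended crystal. -/
theorem sigma_Ftil_eq_Etil (k : ℤ) (b : ℤ →₀ ℕ) :
    sigmaInv (Ftil (-k) (sigmaInv b)) = Etil (k - 1) b := by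
  have happ : ∀ (c : ℤ →₀ ℕ) (i : ℤ), sigmaInv c i = c (-i) := by
    intro c i; rfl
  ext i
  simp only [Ftil, Etil, happ]
  rw [show (-k : ℤ) + 1 = -(k - 1) by ring]
  have h1 : sigmaInv b (-k) = b k := by rw [happ]; ring_nf
  have h2 : sigmaInv b (-(k-1)) = b (k-1) := by rw [happ]; ring_nf
  simp only [neg_neg, show (k - 1 : ℤ) + 1 = k by ring]
  split_ifs with h
  · simp only [Finsupp.coe_update, Function.update_apply, happ]
    rcases eq_or_ne i (k - 1) with rfl | hne
    · simp
    · rw [if_neg (by omega), if_neg hne]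
      congr 1; ring
  · simp only [Finsupp.coe_update, Function.update_apply, happ]
    rcases eq_or_ne i k with rfl | hne
    · simp
    · rw [if_neg (by omega), if_neg hne]
      congr 1; ring
end
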